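/- arXiv:0801.2693 — 4 statements merged into one kernel-verified Lean document; each statement's English description precedes it below -/
import Mathlib

section
/- Let H be self-adjoint with compact resolvent on a separable Hilbert space, U, V bounded self-adjoint, and f : ℝ → ℝ Borel measurable and nonincreasing such that f(H+U) and f(H+V) are trace class. Then tr([f(H+U) − f(H+V)](U − V)) ≤ 0. -/
/-!
The `n`-th diagonal entry of the trace is real: expanding `⟪ψ n, C (ψ n)⟫` in the basis `ξ`
by Parseval and using `⟪ξ l, C (ψ n)⟫ = (λ n - μ l) · conj ⟪ψ n, ξ l⟫` (self-adjointness of `C`)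
turns it into `∑ l, (f (λ n) - f (μ l)) (λ n - μ l) ‖⟪ψ n, ξ l⟫‖²`, and every term of this
double sum is nonpositive because `f` is antitone.
-/

open scoped InnerProductSpace ComplexConjugate

namespace HilbertBasis

variable {ι 𝕜 E : Type*} [RCLike 𝕜] [NormedAddCommGroup E] [InnerProductSpace 𝕜 E]
  [CompleteSpace E] (b : HilbertBasis ι 𝕜 E) {a : ι → 𝕜}

lemma summable_smul_inner_smul (ha : Summable fun i => ‖a i‖) (y : E) :
    Summable fun i => a i • (⟪b i, y⟫_𝕜 • (b i : E)) := by
  refine Summable.of_norm_bounded (ha.mul_right ‖y‖) fun i => ?_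
  rw [norm_smul, norm_smul, b.orthonormal.1 i, mul_one]
  gcongr
  simpa [b.orthonormal.1 i] using norm_inner_le_norm (𝕜 := 𝕜) (b i) y

lemma hasSum_inner_tsum_smul_inner_smul (ha : Summable fun i => ‖a i‖) (x y : E) :
    HasSum (fun i => a i * (⟪b i, y⟫_𝕜 * ⟪x, b i⟫_𝕜))
      ⟪x, ∑' i, a i • (⟪b i, y⟫_𝕜 • (b i : E))⟫_𝕜 := by
  convert (innerSL 𝕜 x).hasSum (b.summable_smul_inner_smul ha y).hasSum using 1
  · ext i
    simp
  · rfl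

lemma inner_tsum_smul_inner_smul_self (ha : Summable fun i => ‖a i‖) (y : E) (n : ι) :
    ⟪b n, ∑' i, a i • (⟪b i, y⟫_𝕜 • (b i : E))⟫_𝕜 = a n * ⟪b n, y⟫_𝕜 := by
  classical
  refine ((b.hasSum_inner_tsum_smul_inner_smul ha (b n) y).unique
    (hasSum_single n fun i hi => ?_)).trans ?_
  · simp [orthonormal_iff_ite.mp b.orthonormal n i, Ne.symm hi]
  · simp [inner_self_eq_norm_sq_to_K, b.orthonormal.1 n]

end HilbertBasis

theorem inner_tsum_sub_tsum_eq_tsum {ι κ E : Type*} [NormedAddCommGroup E]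
    [InnerProductSpace ℂ E] [CompleteSpace E] {ψ : HilbertBasis ι ℂ E} {ξ : HilbertBasis κ ℂ E}
    {lam : ι → ℝ} {mu : κ → ℝ} {C : E →L[ℂ] E} (hCsa : IsSelfAdjoint C)
    (hC : ∀ k l, ⟪ψ k, C (ξ l)⟫_ℂ = ((lam k - mu l : ℝ) : ℂ) * ⟪ψ k, ξ l⟫_ℂ)
    {a : ι → ℝ} {b : κ → ℝ} (ha : Summable fun k => |a k|) (hb : Summable fun l => |b l|)
    (n : ι) :
    ⟪ψ n, (∑' k, (a k : ℂ) • (⟪ψ k, C (ψ n)⟫_ℂ • (ψ k : E)))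
        - ∑' l, (b l : ℂ) • (⟪ξ l, C (ψ n)⟫_ℂ • (ξ l : E))⟫_ℂ
      = ((∑' l, (a n - b l) * (lam n - mu l) * ‖⟪ψ n, ξ l⟫_ℂ‖ ^ 2 : ℝ) : ℂ) := by
  have hC' : ∀ l, ⟪ξ l, C (ψ n)⟫_ℂ = ((lam n - mu l : ℝ) : ℂ) * conj ⟪ψ n, ξ l⟫_ℂ := fun l => by
    have hsymm : ⟪C (ψ n), ξ l⟫_ℂ = ⟪ψ n, C (ξ l)⟫_ℂ := hCsa.isSymmetric _ _
    rw [← inner_conj_symm, hsymm, hC, map_mul, Complex.conj_ofReal]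
  have hX := ψ.inner_tsum_smul_inner_smul_self (a := fun k => (a k : ℂ)) (by simpa using ha)
    (C (ψ n)) n
  have hdiag : HasSum (fun l => (a n : ℂ) * (⟪ψ n, ξ l⟫_ℂ * ⟪ξ l, C (ψ n)⟫_ℂ))
      ((a n : ℂ) * ⟪ψ n, C (ψ n)⟫_ℂ) :=
    (ξ.hasSum_inner_mul_inner _ _).mul_left _
  have hY := ξ.hasSum_inner_tsum_smul_inner_smul (a := fun l => (b l : ℂ)) (by simpa using hb)
    (ψ n) (C (ψ n))
  rw [inner_sub_right, hX, Complex.ofReal_tsum]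
  refine ((hdiag.sub hY).congr_fun fun l => ?_).tsum_eq.symm
  have hnorm := RCLike.mul_conj (⟪ψ n, ξ l⟫_ℂ)
  rw [hC']
  push_cast
  linear_combination (((b l : ℂ) - a n) * (lam n - mu l)) * hnorm

theorem stmt_9_general {E : Type*} [NormedAddCommGroup E] [InnerProductSpace ℂ E]
    [CompleteSpace E]
    (ψb ξb : HilbertBasis ℕ ℂ E) (lam mu : ℕ → ℝ)
    (f : ℝ → ℝ) (hanti : Antitone f)
    (C : E →L[ℂ] E) (hCsa : IsSelfAdjoint C)
    (hC : ∀ k l : ℕ, ⟪ψb k, C (ξb l)⟫_ℂ = ((lam k - mu l : ℝ) : ℂ) * ⟪ψb k, ξb l⟫_ℂ)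
    (hfU : Summable fun k => |f (lam k)|) (hfV : Summable fun l => |f (mu l)|) :
    (∑' n : ℕ,
        ⟪ψb n,
          (∑' k : ℕ, ((f (lam k) : ℝ) : ℂ) • (⟪ψb k, C (ψb n)⟫_ℂ • (ψb k : E)))
            - ∑' l : ℕ, ((f (mu l) : ℝ) : ℂ) • (⟪ξb l, C (ψb n)⟫_ℂ • (ξb l : E))⟫_ℂ).re
      ≤ 0 := by
  rw [tsum_congr (inner_tsum_sub_tsum_eq_tsum hCsa hC hfU hfV), ← Complex.ofReal_tsum,
    Complex.ofReal_re]
  have hanti_id : Antivary f id := hanti.antivary monotone_id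
  exact tsum_nonpos fun n => tsum_nonpos fun l =>
    mul_nonpos_of_nonpos_of_nonneg (hanti_id.sub_mul_sub_nonpos (mu l) (lam n)) (sq_nonneg _)

/-- Monotonicity (Corollary of the trace identity): in the setting of Theorem 5.1 with
`f` nonincreasing, `tr([f(H+U) − f(H+V)](U−V)) ≤ 0`. The setup is as in the trace
identity: complete orthonormal eigensystems `(λ_k, ψ_k)` of `H+U` and `(μ_l, ξ_l)` of
`H+V`, bounded self-adjoint `C = U − V` with `⟪ψ_k, C ξ_l⟫ = (λ_k − μ_l)⟪ψ_k, ξ_l⟫`,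
and `f(H+U)`, `f(H+V)` trace class. -/
theorem stmt_9 {E : Type*} [NormedAddCommGroup E] [InnerProductSpace ℂ E]
    [CompleteSpace E]
    (ψb ξb : HilbertBasis ℕ ℂ E) (lam mu : ℕ → ℝ)
    (f : ℝ → ℝ) (hf : Measurable f) (hanti : Antitone f)
    (C : E →L[ℂ] E) (hCsa : IsSelfAdjoint C)
    (hC : ∀ k l : ℕ, ⟪ψb k, C (ξb l)⟫_ℂ = ((lam k - mu l : ℝ) : ℂ) * ⟪ψb k, ξb l⟫_ℂ)
    (hfU : Summable fun k => |f (lam k)|) (hfV : Summable fun l => |f (mu l)|) :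
    (∑' n : ℕ,
        ⟪ψb n,
          (∑' k : ℕ, ((f (lam k) : ℝ) : ℂ) • (⟪ψb k, C (ψb n)⟫_ℂ • (ψb k : E)))
            - ∑' l : ℕ, ((f (mu l) : ℝ) : ℂ) • (⟪ξb l, C (ψb n)⟫_ℂ • (ξb l : E))⟫_ℂ).re
      ≤ 0 :=
  stmt_9_general ψb ξb lam mu f hanti C hCsa hC hfU hfV
end

section
/- If X is a Banach space continuously embedded in L^1(0,1) such that W^{1,2}_0(0,1) embeds compactly into X, then the particle density operator N_f : L^1(0,1) → X is well defined and continuous. -/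
open Filter Topology Set MeasureTheory

/-!
Near each `V₀` the map `V ↦ e (NfW V)` takes values in one compact set `K`: `NfW` sends a ball
around `V₀` to a bounded set and `e` is compact. Every cluster point of the map at `V₀` lies in
`K` and is sent by `j` to a cluster point of `j ∘ e ∘ NfW = Nf`, which converges to `Nf V₀`;
injectivity of `j` pins the cluster point down to `e (NfW V₀)`, and compactness of `K` turns
uniqueness of the cluster point into convergence.
-/

theorem ContinuousAt.of_comp_injective_of_eventually_mem_isCompact
    {α X Y : Type*} [TopologicalSpace α] [TopologicalSpace X] [TopologicalSpace Y] [T2Space Y]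
    {f : α → X} {g : X → Y} {K : Set X} {a : α}
    (hg : Continuous g) (hg_inj : Function.Injective g) (hK : IsCompact K)
    (hfK : ∀ᶠ x in 𝓝 a, f x ∈ K) (hgf : ContinuousAt (g ∘ f) a) :
    ContinuousAt f a := by
  refine hK.tendsto_nhds_of_unique_mapClusterPt hfK fun x _ hx => hg_inj ?_
  exact eq_of_nhds_neBot ((hx.continuousAt_comp hg.continuousAt).clusterPt.mono hgf).neBot

theorem stmt_13_general
    {W X : Type*} [NormedAddCommGroup W] [NormedSpace ℝ W]
    [NormedAddCommGroup X] [NormedSpace ℝ X]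
    (j : X →L[ℝ] (Lp ℝ 1 (volume.restrict (Set.Ioo (0:ℝ) 1))))
    (hj : Function.Injective j)
    (e : W →L[ℝ] X) (he : IsCompactOperator e)
    (Nf : Lp ℝ 1 (volume.restrict (Set.Ioo (0:ℝ) 1)) →
      Lp ℝ 1 (volume.restrict (Set.Ioo (0:ℝ) 1)))
    (NfW : Lp ℝ 1 (volume.restrict (Set.Ioo (0:ℝ) 1)) → W)
    (hfac : ∀ V, j (e (NfW V)) = Nf V)
    (hbdd : ∀ M : Set (Lp ℝ 1 (volume.restrict (Set.Ioo (0:ℝ) 1))),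
      Bornology.IsBounded M → Bornology.IsBounded (NfW '' M))
    (hcont : Continuous Nf) :
    Continuous fun V => e (NfW V) := by
  have hcomp : j ∘ (fun V => e (NfW V)) = Nf := funext hfac
  refine continuous_iff_continuousAt.2 fun V₀ => ?_
  obtain ⟨K, hK, hball⟩ :=
    he.image_subset_compact_of_bounded (hbdd _ (Metric.isBounded_ball (x := V₀) (r := 1)))
  refine .of_comp_injective_of_eventually_mem_isCompact j.continuous hj hK ?_
    (hcomp ▸ hcont.continuousAt)
  filter_upwards [Metric.ball_mem_nhds V₀ one_pos] with V hV
  exact hball (mem_image_of_mem _ (mem_image_of_mem _ hV))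

/-- Corollary 4.8: if `X` is a Banach space continuously (and injectively) embedded in
`L¹(0,1)` such that `W^{1,2}_0(0,1)` embeds compactly into `X`, then the particle
density operator `N_f : L¹(0,1) → X` is well defined and continuous. The particle
density operator is encoded by its `W^{1,2}_0`-valued lift `NfW` (Theorem 4.7: `N_f`
maps `L¹`-bounded sets into `W^{1,2}_0`-bounded sets and is continuous into `L¹`);
`e : W → X` is the compact embedding and `j : X → L¹` the continuous injection. -/
theorem stmt_13
    {W X : Type*} [NormedAddCommGroup W] [NormedSpace ℝ W]
    [NormedAddCommGroup X] [NormedSpace ℝ X] [CompleteSpace X]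
    (j : X →L[ℝ] (Lp ℝ 1 (volume.restrict (Set.Ioo (0:ℝ) 1))))
    (hj : Function.Injective j)
    (e : W →L[ℝ] X) (he : IsCompactOperator e)
    (Nf : Lp ℝ 1 (volume.restrict (Set.Ioo (0:ℝ) 1)) →
      Lp ℝ 1 (volume.restrict (Set.Ioo (0:ℝ) 1)))
    (NfW : Lp ℝ 1 (volume.restrict (Set.Ioo (0:ℝ) 1)) → W)
    (hfac : ∀ V, j (e (NfW V)) = Nf V)
    (hbdd : ∀ M : Set (Lp ℝ 1 (volume.restrict (Set.Ioo (0:ℝ) 1))),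
      Bornology.IsBounded M → Bornology.IsBounded (NfW '' M))
    (hcont : Continuous Nf) :
    Continuous fun V => e (NfW V) :=
  stmt_13_general j hj e he Nf NfW hfac hbdd hcont
end

section
/- Let {φ, u} be any solution of the Kohn–Sham system. Then the shifted electrostatic potential φ₀ = φ − φ̃ ∈ W^{1,2}_0 satisfies the a priori bound ‖φ₀‖_{W^{1,2}_0} ≤ (1/M)(‖D‖_{W^{-1,2}} + γ·N·q), where M is the monotonicity (coercivity) constant of −(d/dx)(ε d/dx) : W^{1,2}_{0,ℝ} → W^{-1,2}_ℝ and γ is the norm of the embedding L^1(0,1) ↪ W^{-1,2}(0,1). -/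
/-!
Test the weak equation with `φ` itself. Coercivity gives
`M ‖φ‖² ≤ ∫ ε |φ'|² = ⟨D, φ⟩ - q ⟨u, φ⟩ ≤ (‖D‖ + γ q ‖u‖_{L¹}) ‖φ‖`, and `‖u‖_{L¹} = N`
because `u ≥ 0` and the eigenfunctions are `L²`-normalized, whatever `f` is.
-/

open MeasureTheory Set Filter Topology

noncomputable section

/-- The Sobolev space `W^{1,2}_0(0,1)`: a function together with its derivative,
square-integrability of both, continuity up to the boundary, and homogeneous
Dirichlet boundary conditions. -/
structure W120 where
  toFun : ℝ → ℂ
  deriv : ℝ → ℂ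
  contOn : ContinuousOn toFun (Set.Icc 0 1)
  hasDeriv : ∀ x ∈ Set.Ioo (0:ℝ) 1, HasDerivAt toFun (deriv x) x
  derivMeas : Measurable deriv
  sq_int : IntervalIntegrable (fun x => ‖toFun x‖ ^ 2) volume 0 1
  deriv_sq_int : IntervalIntegrable (fun x => ‖deriv x‖ ^ 2) volume 0 1
  bc0 : toFun 0 = 0
  bc1 : toFun 1 = 0

namespace W120

/-- The squared `L²(0,1)`-norm. -/
def l2sq (ψ : W120) : ℝ := ∫ x in (0:ℝ)..1, ‖ψ.toFun x‖ ^ 2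

/-- The squared `W^{1,2}(0,1)`-norm. -/
def normSq (ψ : W120) : ℝ :=
  (∫ x in (0:ℝ)..1, ‖ψ.toFun x‖ ^ 2) + ∫ x in (0:ℝ)..1, ‖ψ.deriv x‖ ^ 2

end W120

/-- The `L²(0,1)` inner product (conjugate-linear in the first argument). -/
def l2inner (φ ψ : W120) : ℂ :=
  ∫ x in (0:ℝ)..1, (starRingEnd ℂ) (φ.toFun x) * ψ.toFun x

/-- The sesquilinear form of the Schrödinger operator
`H_V = -(ħ²/2) d/dx (1/m) d/dx + V` with Dirichlet boundary conditions on `(0,1)`. -/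
def schForm (hbar : ℝ) (m V : ℝ → ℝ) (v w : W120) : ℂ :=
  (hbar ^ 2 / 2 : ℝ) *
      ∫ x in (0:ℝ)..1, ((m x)⁻¹ : ℂ) * ((starRingEnd ℂ) (v.deriv x) * w.deriv x)
    + ∫ x in (0:ℝ)..1, ((V x : ℝ) : ℂ) * ((starRingEnd ℂ) (v.toFun x) * w.toFun x)

/-- `(lam, ψ)` is a (normalized) Dirichlet eigenpair of `H_V`. -/
def IsEigenpair (hbar : ℝ) (m V : ℝ → ℝ) (lam : ℝ) (ψ : W120) : Prop :=
  ψ.l2sq = 1 ∧ ∀ w : W120, schForm hbar m V ψ w = (lam : ℂ) * l2inner ψ w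

/-- `lam` is the increasing enumeration of all eigenvalues of `H_V`. -/
def IsEigenvalueSeq (hbar : ℝ) (m V : ℝ → ℝ) (lam : ℕ → ℝ) : Prop :=
  StrictMono lam ∧ (∀ l, ∃ ψ : W120, IsEigenpair hbar m V (lam l) ψ) ∧
    ∀ (μ : ℝ) (ψ : W120), IsEigenpair hbar m V μ ψ → ∃ l, lam l = μ

/-- `(lam, ψ)` is a complete orthonormal eigensystem of `H_V`. -/
def IsEigensystem (hbar : ℝ) (m V : ℝ → ℝ) (lam : ℕ → ℝ) (ψ : ℕ → W120) : Prop :=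
  IsEigenvalueSeq hbar m V lam ∧ (∀ l, IsEigenpair hbar m V (lam l) (ψ l)) ∧
    ∀ k l, k ≠ l → l2inner (ψ k) (ψ l) = 0

/-- The `L^∞(0,1)`-norm. -/
def supNorm01 (g : ℝ → ℝ) : ℝ :=
  (eLpNorm g ⊤ (volume.restrict (Set.Ioo (0:ℝ) 1))).toReal

/-- The `L¹(0,1)`-norm. -/
def l1Norm01 (V : ℝ → ℝ) : ℝ := ∫ x in (0:ℝ)..1, |V x|

/-- The constant `m̲ = max(1, 2‖m‖_∞/ħ²)`. -/
def mbar (hbar : ℝ) (m : ℝ → ℝ) : ℝ := max 1 (2 * supNorm01 m / hbar ^ 2)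

/-- The constant `ρ_V = −2‖V‖_{L¹}² m̲ − 1`. -/
def rhoV (hbar : ℝ) (m V : ℝ → ℝ) : ℝ := -2 * l1Norm01 V ^ 2 * mbar hbar m - 1

/-- The effective mass satisfies `m, 1/m ∈ L^∞`, `m > 0`. -/
def MassOK (m : ℝ → ℝ) : Prop :=
  Measurable m ∧ ∃ a b : ℝ, 0 < a ∧ ∀ x, a ≤ m x ∧ m x ≤ b

/-- A real potential of class `L¹(0,1)`. -/
def PotOK (V : ℝ → ℝ) : Prop := Measurable V ∧ IntervalIntegrable V volume 0 1

/-- The class `𝒟` of distribution functions: continuous, nonnegative, nonincreasing,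
and either strictly decreasing up to a point and zero afterwards, or everywhere
positive with `sup_{s≥1} f(s)s² < ∞`. -/
def ClassD (f : ℝ → ℝ) : Prop :=
  Continuous f ∧ (∀ s, 0 ≤ f s) ∧ Antitone f ∧
    ((∃ t : ℝ, StrictAntiOn f (Set.Iic t) ∧ ∀ s, t ≤ s → f s = 0) ∨
     ((∀ s, 0 < f s) ∧ ∃ C, ∀ s : ℝ, 1 ≤ s → f s * s ^ 2 ≤ C))

/-- The particle density `u(x) = 2 ∑_l f(λ_l − μ)|ψ_l(x)|²`. -/
def density (f : ℝ → ℝ) (lam : ℕ → ℝ) (μ : ℝ) (ψ : ℕ → W120) (x : ℝ) : ℝ :=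
  2 * ∑' l : ℕ, f (lam l - μ) * ‖(ψ l).toFun x‖ ^ 2

/-- The derivative of the particle density. -/
def densityDeriv (f : ℝ → ℝ) (lam : ℕ → ℝ) (μ : ℝ) (ψ : ℕ → W120) (x : ℝ) : ℝ :=
  2 * ∑' l : ℕ, f (lam l - μ) *
    (2 * ((starRingEnd ℂ) ((ψ l).toFun x) * (ψ l).deriv x).re)

end

/-- The affine correction `φ̃` for inhomogeneous Dirichlet data. -/
noncomputable def phiTilde (ε : ℝ → ℝ) (v0 v1 : ℝ) (x : ℝ) : ℝ :=
  v0 + (v1 - v0) * (∫ t in (0:ℝ)..x, (ε t)⁻¹) / ∫ t in (0:ℝ)..1, (ε t)⁻¹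

/-- `u` is the particle density `N_f(V)` of the potential `V` with particle number
`N`. -/
def IsParticleDensity (hbar : ℝ) (m : ℝ → ℝ) (f : ℝ → ℝ) (N : ℝ)
    (V u : ℝ → ℝ) : Prop :=
  ∃ (lam : ℕ → ℝ) (ψ : ℕ → W120) (μ : ℝ),
    IsEigensystem hbar m V lam ψ ∧
    Summable (fun l : ℕ => f (lam l - μ)) ∧
    2 * ∑' l : ℕ, f (lam l - μ) = N ∧
    ∀ x, u x = density f lam μ ψ x

namespace W120

lemma normSq_nonneg (w : W120) : 0 ≤ w.normSq :=
  add_nonneg (intervalIntegral.integral_nonneg zero_le_one fun _ _ => by positivity)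
    (intervalIntegral.integral_nonneg zero_le_one fun _ _ => by positivity)

noncomputable def bump : W120 where
  toFun x := ((x * (1 - x) : ℝ) : ℂ)
  deriv x := ((1 - 2 * x : ℝ) : ℂ)
  contOn := by fun_prop
  hasDeriv x _ :=
    (((hasDerivAt_id' x).mul ((hasDerivAt_id' x).const_sub 1)).congr_deriv (by ring)).ofReal_comp
  derivMeas := by fun_prop
  sq_int := Continuous.intervalIntegrable (by fun_prop) 0 1
  deriv_sq_int := Continuous.intervalIntegrable (by fun_prop) 0 1
  bc0 := by norm_num
  bc1 := by norm_num

lemma normSq_bump_pos : 0 < bump.normSq := by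
  have hl2 : 0 < ∫ x in (0:ℝ)..1, ‖bump.toFun x‖ ^ 2 := by
    refine intervalIntegral.intervalIntegral_pos_of_pos_on
      (Continuous.intervalIntegrable (by unfold bump; fun_prop) 0 1) (fun x hx => ?_) one_pos
    have hx0 : 0 < x * (1 - x) := mul_pos hx.1 (by linarith [hx.2])
    simp only [bump, Complex.norm_real, Real.norm_eq_abs]
    positivity
  have hderiv : 0 ≤ ∫ x in (0:ℝ)..1, ‖bump.deriv x‖ ^ 2 :=
    intervalIntegral.integral_nonneg zero_le_one fun _ _ => by positivity
  exact add_pos_of_pos_of_nonneg hl2 hderiv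

lemma nonneg_of_forall_norm_le_mul_sqrt_normSq {C : ℝ} (T : W120 → ℂ)
    (h : ∀ w, ‖T w‖ ≤ C * √w.normSq) : 0 ≤ C :=
  nonneg_of_mul_nonneg_left ((norm_nonneg _).trans (h bump)) (Real.sqrt_pos.2 normSq_bump_pos)

lemma integral_ofReal_mul_deriv_mul_conj (ε : ℝ → ℝ) (φ : W120) :
    ∫ x in (0:ℝ)..1, ((ε x : ℝ) : ℂ) * (φ.deriv x * (starRingEnd ℂ) (φ.deriv x))
      = ((∫ x in (0:ℝ)..1, ε x * ‖φ.deriv x‖ ^ 2 : ℝ) : ℂ) := by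
  rw [← intervalIntegral.integral_ofReal]
  refine intervalIntegral.integral_congr fun x _ => ?_
  rw [Complex.mul_conj, ← Complex.sq_norm]
  push_cast
  rfl

end W120

lemma density_nonneg {f : ℝ → ℝ} (hf : ∀ s, 0 ≤ f s) (lam : ℕ → ℝ) (μ : ℝ) (ψ : ℕ → W120)
    (x : ℝ) : 0 ≤ density f lam μ ψ x :=
  mul_nonneg zero_le_two (tsum_nonneg fun _ => mul_nonneg (hf _) (by positivity))

lemma integral_density {f : ℝ → ℝ} {lam : ℕ → ℝ} {μ : ℝ} {ψ : ℕ → W120}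
    (hsum : Summable fun l => f (lam l - μ)) (hψ : ∀ l, (ψ l).l2sq = 1) :
    ∫ x in (0:ℝ)..1, density f lam μ ψ x = 2 * ∑' l, f (lam l - μ) := by
  set F : ℕ → ℝ → ℝ := fun l x => f (lam l - μ) * ‖(ψ l).toFun x‖ ^ 2
  have hF_int : ∀ l, Integrable (F l) (volume.restrict (Ioc 0 1)) := fun l =>
    (ψ l).sq_int.1.const_mul _
  have hF_integral : ∀ l, ∫ x in Ioc 0 1, F l x = f (lam l - μ) := fun l => by
    rw [integral_const_mul, ← intervalIntegral.integral_of_le zero_le_one, ← W120.l2sq, hψ l,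
      mul_one]
  have hF_norm : ∀ l, ∫ x in Ioc 0 1, ‖F l x‖ = |f (lam l - μ)| := fun l => by
    simp only [F, norm_mul, norm_pow, norm_norm]
    rw [integral_const_mul, ← intervalIntegral.integral_of_le zero_le_one, ← W120.l2sq, hψ l,
      mul_one, Real.norm_eq_abs]
  have hsum_norm : Summable fun l => ∫ x in Ioc 0 1, ‖F l x‖ := by
    simpa only [hF_norm] using hsum.abs
  rw [intervalIntegral.integral_of_le zero_le_one]
  change ∫ x in Ioc 0 1, 2 * ∑' l, F l x = _
  rw [integral_const_mul, ← integral_tsum_of_summable_integral_norm hF_int hsum_norm]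
  simp only [hF_integral]

lemma IsParticleDensity.integral_abs_eq {hbar N : ℝ} {m f V u : ℝ → ℝ} (hf : ∀ s, 0 ≤ f s)
    (hu : IsParticleDensity hbar m f N V u) : ∫ x in (0:ℝ)..1, |u x| = N := by
  obtain ⟨lam, ψ, μ, hsys, hsum, hN, hu⟩ := hu
  simp only [hu, abs_of_nonneg (density_nonneg hf lam μ ψ _)]
  rw [integral_density hsum fun l => (hsys.2.1 l).1, hN]

lemma le_norm_add_mul_norm_of_ofReal_add_mul_eq {E q : ℝ} {I D : ℂ} (hq : 0 ≤ q)
    (h : (E : ℂ) + q * I = D) : E ≤ ‖D‖ + q * ‖I‖ :=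
  calc E = (D - q * I).re := by rw [← h]; simp
    _ ≤ ‖D - q * I‖ := Complex.re_le_norm _
    _ ≤ ‖D‖ + ‖(q : ℂ) * I‖ := norm_sub_le _ _
    _ = ‖D‖ + q * ‖I‖ := by rw [norm_mul, Complex.norm_real, Real.norm_of_nonneg hq]

lemma le_one_div_mul_of_mul_sq_le {M K s : ℝ} (hM : 0 < M) (hK : 0 ≤ K) (hs : 0 ≤ s)
    (h : M * s ^ 2 ≤ K * s) : s ≤ 1 / M * K := by
  rw [one_div_mul_eq_div, le_div_iff₀ hM]
  rcases hs.eq_or_lt with rfl | hs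
  · simpa using hK
  · nlinarith

theorem stmt_16_general (hbar : ℝ) (m : ℝ → ℝ)
    (f : ℝ → ℝ) (hf : ClassD f) (N : ℝ)
    (ε : ℝ → ℝ)
    (q : ℝ) (hq : 0 < q) (ΔE : ℝ → ℝ) (v0 v1 : ℝ)
    (Vxc : (ℝ → ℝ) → ℝ → ℝ)
    (d0 d1 : ℝ → ℝ)
    -- `M` is a monotonicity (coercivity) constant of the Poisson operator:
    (M : ℝ) (hM : 0 < M)
    (hMcoer : ∀ w : W120, M * w.normSq ≤ ∫ x in (0:ℝ)..1, ε x * ‖w.deriv x‖ ^ 2)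
    -- `γ` is the norm of the embedding `L¹(0,1) ↪ W^{-1,2}(0,1)`:
    (γ : ℝ)
    (hγ : ∀ g : ℝ → ℝ, IntervalIntegrable g MeasureTheory.volume 0 1 →
      ∀ w : W120, ‖∫ x in (0:ℝ)..1, ((g x : ℝ) : ℂ) * (starRingEnd ℂ) (w.toFun x)‖ ≤
        γ * (∫ x in (0:ℝ)..1, |g x|) * Real.sqrt w.normSq)
    -- `CD` bounds the `W^{-1,2}`-norm of `D`:
    (CD : ℝ)
    (hCD : ∀ w : W120,
      ‖(∫ x in (0:ℝ)..1, ((d0 x : ℝ) : ℂ) * (starRingEnd ℂ) (w.toFun x))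
        + ∫ x in (0:ℝ)..1, ((d1 x : ℝ) : ℂ) * (starRingEnd ℂ) (w.deriv x)‖ ≤
        CD * Real.sqrt w.normSq)
    -- `{φ̃ + φ, u}` is a solution of the Kohn–Sham system:
    (φ : W120) (u : ℝ → ℝ)
    (hu : IsParticleDensity hbar m f N
      (fun x => ΔE x + Vxc u x - q * phiTilde ε v0 v1 x - q * (φ.toFun x).re) u)
    (huint : IntervalIntegrable u MeasureTheory.volume 0 1)
    (heq : ∀ w : W120,
      (∫ x in (0:ℝ)..1, ((ε x : ℝ) : ℂ) * (φ.deriv x * (starRingEnd ℂ) (w.deriv x)))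
        + (q : ℂ) * ∫ x in (0:ℝ)..1, ((u x : ℝ) : ℂ) * (starRingEnd ℂ) (w.toFun x)
      = (∫ x in (0:ℝ)..1, ((d0 x : ℝ) : ℂ) * (starRingEnd ℂ) (w.toFun x))
        + ∫ x in (0:ℝ)..1, ((d1 x : ℝ) : ℂ) * (starRingEnd ℂ) (w.deriv x)) :
    Real.sqrt φ.normSq ≤ (1 / M) * (CD + γ * N * q) := by
  have hN : ∫ x in (0:ℝ)..1, |u x| = N := hu.integral_abs_eq hf.2.1
  have hN0 : 0 ≤ N := hN ▸ intervalIntegral.integral_nonneg zero_le_one fun _ _ => abs_nonneg _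
  have hCD0 : 0 ≤ CD := W120.nonneg_of_forall_norm_le_mul_sqrt_normSq _ hCD
  have hγ0 : 0 ≤ γ := by
    simpa using W120.nonneg_of_forall_norm_le_mul_sqrt_normSq _ (hγ 1 intervalIntegrable_const)
  have henergy := heq φ
  rw [W120.integral_ofReal_mul_deriv_mul_conj] at henergy
  refine le_one_div_mul_of_mul_sq_le hM (by positivity) (Real.sqrt_nonneg _) ?_
  calc M * √φ.normSq ^ 2 = M * φ.normSq := by rw [Real.sq_sqrt φ.normSq_nonneg]
    _ ≤ ∫ x in (0:ℝ)..1, ε x * ‖φ.deriv x‖ ^ 2 := hMcoer φ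
    _ ≤ CD * √φ.normSq + q * (γ * N * √φ.normSq) :=
      (le_norm_add_mul_norm_of_ofReal_add_mul_eq hq.le henergy).trans
        (add_le_add (hCD φ) (mul_le_mul_of_nonneg_left (hN ▸ hγ u huint φ) hq.le))
    _ = (CD + γ * N * q) * √φ.normSq := by ring

/-- Corollary 5.4 (a priori estimate): if `{φ̃ + φ, u}` solves the Kohn–Sham system,
then `‖φ‖_{W^{1,2}_0} ≤ (1/M)(‖D‖_{W^{-1,2}} + γ N q)`, where `M` is the monotonicity
constant of `−(d/dx) ε (d/dx)` and `γ` the norm of the embedding `L¹ ↪ W^{-1,2}`.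
The right-hand side `D = d₀ + d₁'` with `d₀, d₁ ∈ L²` has `W^{-1,2}`-norm at most
`CD`. -/
theorem stmt_16 (hbar : ℝ) (hhbar : 0 < hbar) (m : ℝ → ℝ) (hm : MassOK m)
    (f : ℝ → ℝ) (hf : ClassD f) (N : ℝ) (hN : 1 ≤ N)
    (ε : ℝ → ℝ) (hεmeas : Measurable ε) (c Cu : ℝ) (hc : 0 < c)
    (hεlow : ∀ x, c ≤ ε x) (hεupp : ∀ x, ε x ≤ Cu)
    (q : ℝ) (hq : 0 < q) (ΔE : ℝ → ℝ) (hΔE : PotOK ΔE) (v0 v1 : ℝ)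
    (Vxc : (ℝ → ℝ) → ℝ → ℝ) (hVxc : ∀ v : ℝ → ℝ, PotOK (Vxc v))
    (d0 d1 : ℝ → ℝ) (hd0m : Measurable d0) (hd1m : Measurable d1)
    (hd0 : IntervalIntegrable (fun x => (d0 x) ^ 2) MeasureTheory.volume 0 1)
    (hd1 : IntervalIntegrable (fun x => (d1 x) ^ 2) MeasureTheory.volume 0 1)
    -- `M` is a monotonicity (coercivity) constant of the Poisson operator:
    (M : ℝ) (hM : 0 < M)
    (hMcoer : ∀ w : W120, M * w.normSq ≤ ∫ x in (0:ℝ)..1, ε x * ‖w.deriv x‖ ^ 2)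
    -- `γ` is the norm of the embedding `L¹(0,1) ↪ W^{-1,2}(0,1)`:
    (γ : ℝ)
    (hγ : ∀ g : ℝ → ℝ, IntervalIntegrable g MeasureTheory.volume 0 1 →
      ∀ w : W120, ‖∫ x in (0:ℝ)..1, ((g x : ℝ) : ℂ) * (starRingEnd ℂ) (w.toFun x)‖ ≤
        γ * (∫ x in (0:ℝ)..1, |g x|) * Real.sqrt w.normSq)
    -- `CD` bounds the `W^{-1,2}`-norm of `D`:
    (CD : ℝ)
    (hCD : ∀ w : W120,
      ‖(∫ x in (0:ℝ)..1, ((d0 x : ℝ) : ℂ) * (starRingEnd ℂ) (w.toFun x))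
        + ∫ x in (0:ℝ)..1, ((d1 x : ℝ) : ℂ) * (starRingEnd ℂ) (w.deriv x)‖ ≤
        CD * Real.sqrt w.normSq)
    -- `{φ̃ + φ, u}` is a solution of the Kohn–Sham system:
    (φ : W120) (u : ℝ → ℝ) (hreal : ∀ x, (φ.toFun x).im = 0)
    (hu : IsParticleDensity hbar m f N
      (fun x => ΔE x + Vxc u x - q * phiTilde ε v0 v1 x - q * (φ.toFun x).re) u)
    (huint : IntervalIntegrable u MeasureTheory.volume 0 1)
    (heq : ∀ w : W120,
      (∫ x in (0:ℝ)..1, ((ε x : ℝ) : ℂ) * (φ.deriv x * (starRingEnd ℂ) (w.deriv x)))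
        + (q : ℂ) * ∫ x in (0:ℝ)..1, ((u x : ℝ) : ℂ) * (starRingEnd ℂ) (w.toFun x)
      = (∫ x in (0:ℝ)..1, ((d0 x : ℝ) : ℂ) * (starRingEnd ℂ) (w.toFun x))
        + ∫ x in (0:ℝ)..1, ((d1 x : ℝ) : ℂ) * (starRingEnd ℂ) (w.deriv x)) :
    Real.sqrt φ.normSq ≤ (1 / M) * (CD + γ * N * q) :=
  stmt_16_general hbar m f hf N ε q hq ΔE v0 v1 Vxc d0 d1 M hM hMcoer γ hγ CD hCD φ u hu huint heq
end

section
/- Let T_j > 0 with T_j → 0, β_j = 1/(kT_j), f_j(x) = (1/β_j)ln(1+e^{−β_j x}), and f(x) = max(−x, 0). Then for every a ≤ −1, lim_{j→∞} sup_{x ∈ [a,∞)} |f_j(x) − f(x)|·θ(x) = 0, where θ(x) = max(x, 1). -/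
open Filter Topology

lemma aux18 (c : ℝ) (hc0 : 0 < c) (hc1 : c ≤ 1) (x : ℝ) :
    |c * Real.log (1 + Real.exp (-(x / c))) - max (-x) 0| * max x 1 ≤ c * Real.log 2 := by
  set E := Real.exp (-(x / c)) with hE
  have hEpos : 0 < E := Real.exp_pos _
  have h1E : (1:ℝ) < 1 + E := by linarith
  have hlogpos : 0 ≤ Real.log (1 + E) := Real.log_nonneg h1E.le
  have hge : max (-x) 0 ≤ c * Real.log (1 + E) := by
    rcases le_or_gt 0 (-x) with h | h
    · rw [max_eq_left h]
      have hlog : -(x / c) ≤ Real.log (1 + E) := by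
        calc -(x / c) = Real.log E := (Real.log_exp _).symm
          _ ≤ Real.log (1 + E) := Real.log_le_log hEpos (by linarith)
      have := mul_le_mul_of_nonneg_left hlog hc0.le
      rw [mul_neg, mul_div_cancel₀ _ hc0.ne'] at this
      linarith
    · rw [max_eq_right h.le]; positivity
  rw [abs_of_nonneg (by linarith)]
  rcases le_or_gt x 1 with hx | hx
  · rw [max_eq_right hx, mul_one]
    have key : c * Real.log (1 + E) - max (-x) 0 ≤ c * Real.log 2 := by
      rcases le_or_gt 0 x with h0 | h0
      · rw [max_eq_right (by linarith)]
        have hE1 : E ≤ 1 := Real.exp_le_one_iff.mpr (by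
          apply neg_nonpos_of_nonneg; positivity)
        have := Real.log_le_log (by linarith : (0:ℝ) < 1 + E) (by linarith : 1 + E ≤ 2)
        nlinarith
      · rw [max_eq_left (by linarith)]
        have hexp : Real.exp (x / c) ≤ 1 := Real.exp_le_one_iff.mpr
          (div_nonpos_of_nonpos_of_nonneg h0.le hc0.le)
        have hmul : Real.exp (x / c) * (1 + E) = Real.exp (x / c) + 1 := by
          rw [hE, mul_add, mul_one, ← Real.exp_add]
          ring_nf
          rw [Real.exp_zero]
          ring
        have hlog2 : Real.log (1 + E) + x / c ≤ Real.log 2 := by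
          have : Real.log (Real.exp (x / c) * (1 + E)) ≤ Real.log 2 := by
            apply Real.log_le_log (by positivity)
            rw [hmul]; linarith [Real.exp_pos (x / c)]
          rwa [Real.log_mul (Real.exp_pos _).ne' (by linarith), Real.log_exp,
            add_comm] at this
        have := mul_le_mul_of_nonneg_left hlog2 hc0.le
        rw [mul_add, mul_div_cancel₀ _ hc0.ne'] at this
        linarith
    linarith
  · rw [max_eq_left hx.le, max_eq_right (by linarith)]
    rw [sub_zero]
    have hlogE : Real.log (1 + E) ≤ E := by
      have := Real.log_le_sub_one_of_pos (by linarith : (0:ℝ) < 1 + E)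
      linarith
    have hxc : x ≤ x / c := by
      rw [le_div_iff₀ hc0]; nlinarith
    have hEx : E ≤ Real.exp (-x) := Real.exp_le_exp.mpr (by linarith)
    have hxe : x * Real.exp (-x) ≤ Real.exp (-1) := by
      have h1 : x ≤ Real.exp (x - 1) := by
        have := Real.add_one_le_exp (x - 1)
        linarith
      calc x * Real.exp (-x) ≤ Real.exp (x - 1) * Real.exp (-x) :=
            mul_le_mul_of_nonneg_right h1 (Real.exp_pos _).le
        _ = Real.exp (-1) := by rw [← Real.exp_add]; ring_nf
    have hexpinv : Real.exp (-1) ≤ 1 / 2 := by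
      have h2 : (2:ℝ) ≤ Real.exp 1 := by linarith [Real.add_one_le_exp (1:ℝ)]
      rw [Real.exp_neg]
      calc (Real.exp 1)⁻¹ ≤ (2:ℝ)⁻¹ := by
            apply inv_anti₀ (by norm_num) h2
        _ = 1 / 2 := by norm_num
    have hlog2 : (1:ℝ) / 2 ≤ Real.log 2 := by
      have := Real.log_two_gt_d9; linarith
    have hExx : E * x ≤ Real.log 2 := by
      have : E * x ≤ Real.exp (-x) * x := by
        apply mul_le_mul_of_nonneg_right hEx (by linarith)
      nlinarith
    calc c * Real.log (1 + E) * x ≤ c * E * x := by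
          apply mul_le_mul_of_nonneg_right _ (by linarith)
          exact mul_le_mul_of_nonneg_left hlogE hc0.le
      _ = c * (E * x) := by ring
      _ ≤ c * Real.log 2 := mul_le_mul_of_nonneg_left hExx hc0.le

/-- Weighted uniform convergence of the finite-temperature 1D distribution function
`f_j(x) = (1/β_j) ln(1+e^{−β_j x})`, `β_j = 1/(k T_j)`, to the zero-temperature limit
`f(x) = max(−x,0)`, with weight `θ(x) = max(x,1)`, uniformly on `[a,∞)` for `a ≤ -1`. -/
theorem stmt_18 (k : ℝ) (hk : 0 < k) (T : ℕ → ℝ) (hT : ∀ j, 0 < T j)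
    (hT0 : Tendsto T atTop (nhds 0)) (a : ℝ) (ha : a ≤ -1) :
    Tendsto
      (fun j => ⨆ x : Set.Ici a,
        |(k * T j) * Real.log (1 + Real.exp (-((x : ℝ) / (k * T j)))) - max (-(x : ℝ)) 0|
          * max (x : ℝ) 1)
      atTop (nhds 0) := by
  have hc : Tendsto (fun j => k * T j) atTop (nhds 0) := by
    simpa using hT0.const_mul k
  have hb : Tendsto (fun j => k * T j * Real.log 2) atTop (nhds 0) := by
    simpa using hc.mul_const (Real.log 2)
  have hne : Nonempty (Set.Ici a) := ⟨⟨a, le_refl a⟩⟩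
  apply squeeze_zero' ?_ ?_ hb
  · filter_upwards with j
    apply Real.iSup_nonneg
    intro x
    exact mul_nonneg (abs_nonneg _) (le_trans zero_le_one (le_max_right _ _))
  · have h1 : ∀ᶠ j in atTop, k * T j < 1 := hc.eventually_lt_const (by norm_num)
    filter_upwards [h1] with j hj
    apply ciSup_le
    rintro ⟨x, hx⟩
    exact aux18 (k * T j) (mul_pos hk (hT j)) hj.le x
end
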